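/- Let 1 ≤ p < ∞ and s ∈ ℝ with (s−1)p ≤ −1. Then almost surely sup_{j≥0} ( Σ_{|n|∼2^j} ⟨n⟩^{sp} |n|^{−p} |g_n|^p )^{1/p} < ∞; that is, the Fourier–Wiener series u belongs almost surely to the Fourier–Besov space b̂^s_{p,∞}(𝕋), including the endpoint case (s−1)p = −1. -/

import Mathlib

/-!
Enumerate `ℤ ∖ {0}` as `1, -1, 2, -2, …`. The variables `‖gₙ‖^p` along this enumeration are
pairwise independent, identically distributed and integrable (Gaussians have moments of all
orders), so by the strong law of large numbers their Cesàro means are almost surely bounded.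
For `|n| ∼ 2^j` the weight satisfies `⟨n⟩^{sp} |n|^{-p} ≲ |n|^{(s-1)p} ≤ |n|^{-1} < 2^{1-j}`,
and the block lies among the first `2^{j+1}` terms of the enumeration, so the `p`-th power of
the `j`-th block is at most a constant times the mean of the first `2^{j+1}` terms.
-/

open MeasureTheory ProbabilityTheory Filter

noncomputable section

/-- The family `(gₙ)_{n ∈ ℤ ∖ {0}}` is a family of independent standard complex-valued
Gaussian random variables: writing `gₙ = aₙ + i bₙ`, all the real and imaginary parts
`aₙ, bₙ` (for `n ≠ 0`) are mutually independent standard real `N(0,1)` Gaussians. -/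
def IsStdComplexGaussianFamily {Ω : Type*} [MeasurableSpace Ω] (P : Measure Ω)
    (g : ℤ → Ω → ℂ) : Prop :=
  iIndepFun (m := fun _ => (inferInstance : MeasurableSpace ℝ))
    (fun i : {n : ℤ // n ≠ 0} × Bool => fun ω =>
      if i.2 then (g (i.1 : ℤ) ω).re else (g (i.1 : ℤ) ω).im) P ∧
  ∀ i : {n : ℤ // n ≠ 0} × Bool,
    P.map (fun ω => if i.2 then (g (i.1 : ℤ) ω).re else (g (i.1 : ℤ) ω).im)
      = gaussianReal 0 1

/-- The dyadic block `{n ∈ ℤ : 2^{j-1} < |n| ≤ 2^j}` (i.e. `|n| ∼ 2^j`). -/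
def dyadicBlock (j : ℕ) : Finset ℤ :=
  (Finset.Icc (-(2 ^ j : ℤ)) (2 ^ j)).filter fun n => (2 : ℤ) ^ j < 2 * |n| ∧ |n| ≤ 2 ^ j

/-- The `j`-th block piece of the Fourier–Besov norm of the Fourier–Wiener series:
`( Σ_{|n| ∼ 2^j} ⟨n⟩^{sp} |n|^{-p} aₙ^p )^{1/p}`, where `aₙ = |gₙ(ω)|`. -/
def fbBlock (a : ℤ → ℝ) (p s : ℝ) (j : ℕ) : ℝ :=
  (∑ n ∈ dyadicBlock j,
      (1 + (n : ℝ) ^ 2) ^ (s * p / 2) * |(n : ℝ)| ^ (-p) * a n ^ p) ^ (1 / p)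

open scoped ENNReal

def zigzag (k : ℕ) : ℤ := if k % 2 = 0 then (k : ℤ) / 2 + 1 else -((k : ℤ) / 2 + 1)

def zigzagIndex (n : ℤ) : ℕ := 2 * (n.natAbs - 1) + if 0 < n then 0 else 1

lemma zigzag_ne_zero (k : ℕ) : zigzag k ≠ 0 := by
  unfold zigzag; split <;> omega

lemma zigzag_injective : Function.Injective zigzag := by
  intro k l h
  unfold zigzag at h
  split_ifs at h <;> omega

lemma zigzag_zigzagIndex {n : ℤ} (hn : n ≠ 0) : zigzag (zigzagIndex n) = n := by
  unfold zigzag zigzagIndex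
  split_ifs <;> omega

lemma zigzagIndex_lt_two_mul {n : ℤ} {M : ℕ} (hn : n ≠ 0) (h : |n| ≤ M) :
    zigzagIndex n < 2 * M := by
  rw [Int.abs_eq_natAbs] at h
  unfold zigzagIndex
  split_ifs <;> omega

lemma mem_dyadicBlock {j : ℕ} {n : ℤ} :
    n ∈ dyadicBlock j ↔ 2 ^ j < 2 * |n| ∧ |n| ≤ 2 ^ j := by
  rw [dyadicBlock, Finset.mem_filter, Finset.mem_Icc, and_iff_right_iff_imp]
  exact fun h => abs_le.1 h.2

lemma sum_dyadicBlock_le_sum_range_zigzag {b : ℤ → ℝ} (hb : ∀ n, 0 ≤ b n) (j : ℕ) :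
    ∑ n ∈ dyadicBlock j, b n ≤ ∑ k ∈ Finset.range (2 ^ (j + 1)), b (zigzag k) := by
  refine (Finset.sum_le_sum_of_subset_of_nonneg (fun n hn => ?_) fun n _ _ => hb n).trans_eq
    (Finset.sum_map _ ⟨zigzag, zigzag_injective⟩ b)
  obtain ⟨hlow, hhigh⟩ := mem_dyadicBlock.1 hn
  have hn0 : n ≠ 0 := by
    rintro rfl
    simp only [abs_zero, mul_zero] at hlow
    exact (pow_pos two_pos j).not_gt hlow
  refine Finset.mem_map.2 ⟨zigzagIndex n, Finset.mem_range.2 ?_, zigzag_zigzagIndex hn0⟩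
  rw [pow_succ, mul_comm]
  exact zigzagIndex_lt_two_mul hn0 (by exact_mod_cast hhigh)

lemma one_add_sq_rpow_half_le {x : ℝ} (hx : 1 ≤ x) (t : ℝ) :
    (1 + x ^ 2) ^ (t / 2) ≤ 2 ^ (|t| / 2) * x ^ t := by
  have hx0 : 0 < x := one_pos.trans_le hx
  have hsq : ∀ c : ℝ, 0 ≤ c → (c * x ^ 2) ^ (t / 2) = c ^ (t / 2) * x ^ t := fun c hc => by
    rw [Real.mul_rpow hc (by positivity), ← Real.rpow_natCast, ← Real.rpow_mul hx0.le]
    ring_nf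
  rcases le_or_gt 0 t with ht | ht
  · calc (1 + x ^ 2) ^ (t / 2) ≤ (2 * x ^ 2) ^ (t / 2) :=
          Real.rpow_le_rpow (by positivity) (by nlinarith) (by positivity)
      _ = 2 ^ (|t| / 2) * x ^ t := by rw [hsq 2 zero_le_two, abs_of_nonneg ht]
  · calc (1 + x ^ 2) ^ (t / 2) ≤ (1 * x ^ 2) ^ (t / 2) :=
          Real.rpow_le_rpow_of_nonpos (by positivity) (by linarith) (by linarith)
      _ = 1 * x ^ t := by rw [hsq 1 zero_le_one, Real.one_rpow]
      _ ≤ 2 ^ (|t| / 2) * x ^ t := by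
          gcongr
          exact Real.one_le_rpow one_le_two (by positivity)

lemma weight_le_of_mem_dyadicBlock {p s : ℝ} (hsp : (s - 1) * p ≤ -1) {j : ℕ}
    {n : ℤ} (hn : n ∈ dyadicBlock j) :
    (1 + (n : ℝ) ^ 2) ^ (s * p / 2) * |(n : ℝ)| ^ (-p) ≤ 2 ^ (|s * p| / 2) * (2 / 2 ^ j) := by
  obtain ⟨hlow, hhigh⟩ := mem_dyadicBlock.1 hn
  have hlow' : (2 : ℝ) ^ j < 2 * |(n : ℝ)| := by exact_mod_cast hlow
  have hx : 1 ≤ |(n : ℝ)| := by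
    have : (1 : ℤ) ≤ |n| := by linarith [one_le_pow₀ (M₀ := ℤ) one_le_two (n := j)]
    exact_mod_cast this
  have hx0 : 0 < |(n : ℝ)| := one_pos.trans_le hx
  calc (1 + (n : ℝ) ^ 2) ^ (s * p / 2) * |(n : ℝ)| ^ (-p)
      ≤ 2 ^ (|s * p| / 2) * |(n : ℝ)| ^ (s * p) * |(n : ℝ)| ^ (-p) := by
        rw [← sq_abs]
        gcongr
        exact one_add_sq_rpow_half_le hx _
    _ = 2 ^ (|s * p| / 2) * |(n : ℝ)| ^ ((s - 1) * p) := by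
        rw [mul_assoc, ← Real.rpow_add hx0]
        ring_nf
    _ ≤ 2 ^ (|s * p| / 2) * |(n : ℝ)|⁻¹ := by
        rw [← Real.rpow_neg_one]
        gcongr
    _ ≤ 2 ^ (|s * p| / 2) * (2 / 2 ^ j) := by
        gcongr
        rw [inv_le_comm₀ hx0 (by positivity), inv_div]
        linarith

lemma fbBlock_le {a : ℤ → ℝ} (ha : ∀ n, 0 ≤ a n) {p s : ℝ} (hp : 0 ≤ p)
    (hsp : (s - 1) * p ≤ -1) (j : ℕ) :
    fbBlock a p s j ≤ (2 ^ (|s * p| / 2) * 4 *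
      ((∑ k ∈ Finset.range (2 ^ (j + 1)), a (zigzag k) ^ p) / 2 ^ (j + 1))) ^ (1 / p) := by
  have hpow : ∀ n, 0 ≤ a n ^ p := fun n => Real.rpow_nonneg (ha n) p
  refine Real.rpow_le_rpow (Finset.sum_nonneg fun n _ => mul_nonneg (by positivity) (hpow n)) ?_
    (by positivity)
  calc ∑ n ∈ dyadicBlock j, (1 + (n : ℝ) ^ 2) ^ (s * p / 2) * |(n : ℝ)| ^ (-p) * a n ^ p
      ≤ ∑ n ∈ dyadicBlock j, 2 ^ (|s * p| / 2) * (2 / 2 ^ j) * a n ^ p :=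
        Finset.sum_le_sum fun n hn =>
          mul_le_mul_of_nonneg_right (weight_le_of_mem_dyadicBlock hsp hn) (hpow n)
    _ ≤ 2 ^ (|s * p| / 2) * (2 / 2 ^ j) *
          ∑ k ∈ Finset.range (2 ^ (j + 1)), a (zigzag k) ^ p := by
        rw [← Finset.mul_sum]
        gcongr
        exact sum_dyadicBlock_le_sum_range_zigzag hpow j
    _ = _ := by
        field_simp
        ring

lemma bddAbove_range_fbBlock {a : ℤ → ℝ} (ha : ∀ n, 0 ≤ a n) {p s : ℝ} (hp : 0 ≤ p)
    (hsp : (s - 1) * p ≤ -1)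
    (h : BddAbove (Set.range fun N : ℕ => (∑ k ∈ Finset.range N, a (zigzag k) ^ p) / N)) :
    BddAbove (Set.range (fbBlock a p s)) := by
  obtain ⟨S, hS⟩ := h
  refine ⟨(2 ^ (|s * p| / 2) * 4 * S) ^ (1 / p), ?_⟩
  rintro _ ⟨j, rfl⟩
  have hmean : (∑ k ∈ Finset.range (2 ^ (j + 1)), a (zigzag k) ^ p) / 2 ^ (j + 1) ≤ S := by
    exact_mod_cast hS ⟨2 ^ (j + 1), rfl⟩
  refine (fbBlock_le ha hp hsp j).trans (Real.rpow_le_rpow ?_ (by gcongr) (by positivity))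
  exact mul_nonneg (by positivity)
    (div_nonneg (Finset.sum_nonneg fun k _ => Real.rpow_nonneg (ha _) p) (by positivity))

namespace IsStdComplexGaussianFamily

variable {Ω : Type*} [MeasurableSpace Ω] {P : Measure Ω} {g : ℤ → Ω → ℂ}

lemma aemeasurable_component (hg : IsStdComplexGaussianFamily P g)
    (i : {n : ℤ // n ≠ 0} × Bool) :
    AEMeasurable (fun ω => if i.2 then (g i.1 ω).re else (g i.1 ω).im) P :=
  .of_map_ne_zero (by rw [hg.2 i]; exact IsProbabilityMeasure.ne_zero _)

lemma aemeasurable_re (hg : IsStdComplexGaussianFamily P g) {n : ℤ} (hn : n ≠ 0) :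
    AEMeasurable (fun ω => (g n ω).re) P :=
  hg.aemeasurable_component (⟨n, hn⟩, true)

lemma aemeasurable_im (hg : IsStdComplexGaussianFamily P g) {n : ℤ} (hn : n ≠ 0) :
    AEMeasurable (fun ω => (g n ω).im) P :=
  hg.aemeasurable_component (⟨n, hn⟩, false)

lemma map_re (hg : IsStdComplexGaussianFamily P g) {n : ℤ} (hn : n ≠ 0) :
    P.map (fun ω => (g n ω).re) = gaussianReal 0 1 :=
  hg.2 (⟨n, hn⟩, true)

lemma map_im (hg : IsStdComplexGaussianFamily P g) {n : ℤ} (hn : n ≠ 0) :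
    P.map (fun ω => (g n ω).im) = gaussianReal 0 1 :=
  hg.2 (⟨n, hn⟩, false)

lemma memLp (hg : IsStdComplexGaussianFamily P g) {n : ℤ} (hn : n ≠ 0) {q : ℝ≥0∞}
    (hq : q ≠ ∞) : MemLp (g n) q P := by
  refine memLp_re_im_iff.1 ⟨?_, ?_⟩
  · refine (memLp_map_measure_iff aestronglyMeasurable_id (hg.aemeasurable_re hn)).1 ?_
    rw [hg.map_re hn]
    exact memLp_id_gaussianReal' q hq
  · refine (memLp_map_measure_iff aestronglyMeasurable_id (hg.aemeasurable_im hn)).1 ?_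
    rw [hg.map_im hn]
    exact memLp_id_gaussianReal' q hq

lemma map_re_prod_im [IsFiniteMeasure P] (hg : IsStdComplexGaussianFamily P g) {n : ℤ}
    (hn : n ≠ 0) :
    P.map (fun ω => ((g n ω).re, (g n ω).im)) = (gaussianReal 0 1).prod (gaussianReal 0 1) := by
  have hindep : IndepFun (fun ω => (g n ω).re) (fun ω => (g n ω).im) P :=
    hg.1.indepFun (i := (⟨n, hn⟩, true)) (j := (⟨n, hn⟩, false)) (by simp)
  rw [indepFun_iff_map_prod_eq_prod_map_map (hg.aemeasurable_re hn) (hg.aemeasurable_im hn)]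
    at hindep
  rw [hindep, hg.map_re hn, hg.map_im hn]

lemma identDistrib [IsFiniteMeasure P] (hg : IsStdComplexGaussianFamily P g) {n m : ℤ}
    (hn : n ≠ 0) (hm : m ≠ 0) :
    IdentDistrib (g n) (g m) P P := by
  have hpair : IdentDistrib (fun ω => ((g n ω).re, (g n ω).im))
      (fun ω => ((g m ω).re, (g m ω).im)) P P :=
    ⟨(hg.aemeasurable_re hn).prodMk (hg.aemeasurable_im hn),
      (hg.aemeasurable_re hm).prodMk (hg.aemeasurable_im hm),
      by rw [hg.map_re_prod_im hn, hg.map_re_prod_im hm]⟩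
  exact hpair.comp Complex.measurableEquivRealProd.symm.measurable

lemma indepFun (hg : IsStdComplexGaussianFamily P g) {n m : ℤ} (hn : n ≠ 0) (hm : m ≠ 0)
    (hnm : n ≠ m) : IndepFun (g n) (g m) P := by
  have hpair := hg.1.indepFun_prodMk_prodMk₀ hg.aemeasurable_component
    (⟨n, hn⟩, true) (⟨n, hn⟩, false) (⟨m, hm⟩, true) (⟨m, hm⟩, false)
    (by simp [hnm]) (by simp [hnm]) (by simp [hnm]) (by simp [hnm])
  exact hpair.comp Complex.measurableEquivRealProd.symm.measurable
    Complex.measurableEquivRealProd.symm.measurable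

end IsStdComplexGaussianFamily

/-- If `1 ≤ p < ∞` and `(s-1)p ≤ -1` (including the endpoint `(s-1)p = -1`), then
almost surely `sup_j ( Σ_{|n|∼2^j} ⟨n⟩^{sp} |n|^{-p} |gₙ|^p )^{1/p} < ∞`, i.e. the
Fourier–Wiener series belongs a.s. to `b̂^s_{p,∞}(𝕋)`. -/
theorem brownian_in_FourierBesov_qInfty
    {Ω : Type*} [MeasurableSpace Ω] (P : Measure Ω) [IsProbabilityMeasure P]
    (g : ℤ → Ω → ℂ) (hg : IsStdComplexGaussianFamily P g)
    (p s : ℝ) (hp : 1 ≤ p) (hsp : (s - 1) * p ≤ -1) :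
    ∀ᵐ ω ∂P,
      BddAbove (Set.range fun j : ℕ =>
        fbBlock (fun n => ‖g n ω‖) p s j) := by
  have hp0 : 0 ≤ p := zero_le_one.trans hp
  have hnorm : Measurable fun z : ℂ => ‖z‖ ^ p := by fun_prop
  set X : ℕ → Ω → ℝ := fun k ω => ‖g (zigzag k) ω‖ ^ p
  have hint : Integrable (X 0) P := by
    have := (hg.memLp (zigzag_ne_zero 0) (ENNReal.ofReal_ne_top (r := p))).integrable_norm_rpow'
    rwa [ENNReal.toReal_ofReal hp0] at this
  have hindep : Pairwise (Function.onFun (· ⟂ᵢ[P] ·) X) := fun k l hkl =>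
    (hg.indepFun (zigzag_ne_zero k) (zigzag_ne_zero l) (zigzag_injective.ne hkl)).comp
      hnorm hnorm
  have hident : ∀ k, IdentDistrib (X k) (X 0) P P := fun k =>
    (hg.identDistrib (zigzag_ne_zero k) (zigzag_ne_zero 0)).comp hnorm
  filter_upwards [strong_law_ae_real X hint hindep hident] with ω hω
  exact bddAbove_range_fbBlock (fun n => norm_nonneg _) hp0 hsp hω.bddAbove_range
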